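/- Suppose M_d(β) is positive semidefinite and recursively generated, the column relations X^{n+i}Y^j = (x^i y^j p)(X,Y) hold for all i,j ≥ 0 with n+i+j ≤ d and the column relations X^kY^{m+l} = (x^k y^l q)(X,Y) hold for all k,l ≥ 0 with m+k+l ≤ d, where 1 ≤ n, m ≤ d, p has degree ≤ n−1, and q has degree ≤ m with no y^m monomial. If n ≤ d − m + 1 (equivalently n + m ≤ d + 1), then M_d(β) is flat: rank M_d(β) = rank M_{d−1}(β), i.e., every column of M_d indexed by a monomial of degree d lies in the span of the columns indexed by monomials of degree ≤ d − 1. -/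

import Mathlib

open Finset Matrix

noncomputable section

/-- Monomial indices of degree at most `d` (the monomial `x^i y^j` is the pair `(i,j)`). -/
abbrev Idx (d : ℕ) : Type := {ij : ℕ × ℕ // ij.1 + ij.2 ≤ d}

/-- Monomial indices of degree exactly `e`. -/
abbrev Jdx (e : ℕ) : Type := {ij : ℕ × ℕ // ij.1 + ij.2 = e}

instance (d : ℕ) : Fintype (Idx d) :=
  Fintype.subtype
    ((Finset.range (d + 1) ×ˢ Finset.range (d + 1)).filter fun ij => ij.1 + ij.2 ≤ d)
    (by
      rintro ⟨a, b⟩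
      simp only [Finset.mem_filter, Finset.mem_product, Finset.mem_range]
      omega)

instance (e : ℕ) : Fintype (Jdx e) :=
  Fintype.subtype
    ((Finset.range (e + 1) ×ˢ Finset.range (e + 1)).filter fun ij => ij.1 + ij.2 = e)
    (by
      rintro ⟨a, b⟩
      simp only [Finset.mem_filter, Finset.mem_product, Finset.mem_range]
      omega)

/-- The moment matrix `M_d(β)`: rows and columns are indexed by monomials of degree ≤ d,
with entry in row `(i,j)`, column `(k,l)` equal to `β (i+k) (j+l)`. -/
def momentMatrix (d : ℕ) (β : ℕ → ℕ → ℝ) : Matrix (Idx d) (Idx d) ℝ :=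
  Matrix.of fun r c => β (r.1.1 + c.1.1) (r.1.2 + c.1.2)

/-- The coefficient vector (truncated to degree ≤ d) of the polynomial with
coefficient function `a`. -/
def coeffVec (d : ℕ) (a : ℕ → ℕ → ℝ) : Idx d → ℝ := fun c => a c.1.1 c.1.2

/-- `p(X,Y)`: the linear combination of the columns of `M_d(β)` given by the
coefficient function `a` of `p`. -/
def polyCol (d : ℕ) (β : ℕ → ℕ → ℝ) (a : ℕ → ℕ → ℝ) : Idx d → ℝ :=
  momentMatrix d β *ᵥ coeffVec d a

/-- Coefficient function of the monomial `x^u y^v`. -/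
def monoC (u v : ℕ) : ℕ → ℕ → ℝ := fun k l => if k = u ∧ l = v then 1 else 0

/-- Coefficient function of `x^u y^v * p`, where `p` has coefficient function `a`. -/
def shiftC (u v : ℕ) (a : ℕ → ℕ → ℝ) : ℕ → ℕ → ℝ :=
  fun k l => if u ≤ k ∧ v ≤ l then a (k - u) (l - v) else 0

/-- The polynomial with coefficient function `a` has (total) degree at most `D`. -/
def DegLE (a : ℕ → ℕ → ℝ) (D : ℕ) : Prop := ∀ k l : ℕ, D < k + l → a k l = 0

/-- Coefficient function of the product of two polynomials. -/
def cMul (a b : ℕ → ℕ → ℝ) : ℕ → ℕ → ℝ := fun k l =>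
  ∑ i ∈ Finset.range (k + 1), ∑ j ∈ Finset.range (l + 1), a i j * b (k - i) (l - j)

/-- `M_d(β)` is recursively generated: whenever `p, q, pq` all have degree ≤ d and
`p(X,Y) = 0`, also `(pq)(X,Y) = 0`. -/
def RecursivelyGenerated (d : ℕ) (β : ℕ → ℕ → ℝ) : Prop :=
  ∀ a b : ℕ → ℕ → ℝ, DegLE a d → DegLE b d → DegLE (cMul a b) d →
    polyCol d β a = 0 → polyCol d β (cMul a b) = 0

/-! Every degree-`d` column `X^i Y^j` lies in the span of the columns of lower degree. If
`i ≥ n`, the relation `X^n = p` with `deg p < n` rewrites it through lower columns. If `i < n`,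
then `j ≥ m`, and `Y^m = q` rewrites it through lower columns and degree-`d` columns
`X^{i+a} Y^{j-m+b}` with `a + b = m`; as `q` has no `y^m` term, `a ≥ 1`, so induction on `n - i`
applies. For the ranks: if every column of a symmetric matrix `M` is `M_{·,f} W`, then by
symmetry `M = Wᵀ M_{f,f} W`, so `rank M ≤ rank M_{f,f}`. -/

theorem Matrix.IsSymm.rank_submatrix_eq_of_col_mem_span {ι κ R : Type*}
    [Fintype ι] [Fintype κ] [CommRing R] [StrongRankCondition R] {M : Matrix ι ι R}
    (hM : M.IsSymm) (f : κ → ι)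
    (hcol : ∀ j, M.col j ∈ Submodule.span R (Set.range fun k => M.col (f k))) :
    (M.submatrix f f).rank = M.rank := by
  choose C hC using fun j => (Submodule.mem_span_range_iff_exists_fun R).1 (hcol j)
  set W : Matrix κ ι R := Matrix.of fun k j => C j k
  have hcols : M = M.submatrix id f * W := by
    ext i j
    simpa [Matrix.mul_apply, W, mul_comm] using (congrFun (hC j) i).symm
  have hrows : M = Wᵀ * M.submatrix f id := by
    conv_lhs => rw [← hM.eq, hcols]
    rw [Matrix.transpose_mul, Matrix.transpose_submatrix, hM.eq]
  have hfactor : M = Wᵀ * M.submatrix f f * W := by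
    conv_lhs => rw [hcols, hrows]
    rw [Matrix.submatrix_mul _ _ id id f Function.bijective_id]
    simp
  refine le_antisymm (M.rank_submatrix_le f f) ?_
  calc M.rank = (Wᵀ * M.submatrix f f * W).rank := by rw [← hfactor]
    _ ≤ (Wᵀ * M.submatrix f f).rank := Matrix.rank_mul_le_left _ _
    _ ≤ (M.submatrix f f).rank := Matrix.rank_mul_le_right _ _

def Idx.castLE {d' d : ℕ} (h : d' ≤ d) (c : Idx d') : Idx d := ⟨c.1, c.2.trans h⟩

lemma momentMatrix_isSymm (d : ℕ) (β : ℕ → ℕ → ℝ) : (momentMatrix d β).IsSymm := by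
  ext r c
  simp only [Matrix.transpose_apply, momentMatrix, Matrix.of_apply, add_comm]

lemma momentMatrix_eq_submatrix {d' d : ℕ} (h : d' ≤ d) (β : ℕ → ℕ → ℝ) :
    momentMatrix d' β = (momentMatrix d β).submatrix (Idx.castLE h) (Idx.castLE h) :=
  rfl

lemma shiftC_sub (u v : ℕ) (a b : ℕ → ℕ → ℝ) :
    shiftC u v (a - b) = shiftC u v a - shiftC u v b := by
  funext k l
  simp only [shiftC, Pi.sub_apply]
  split_ifs <;> simp

lemma shiftC_monoC (u v i j : ℕ) : shiftC i j (monoC u v) = monoC (u + i) (v + j) := by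
  funext k l
  simp only [shiftC, monoC]
  split_ifs <;> first | rfl | (exfalso; omega)

lemma shiftC_ne_zero {u v k l : ℕ} {a : ℕ → ℕ → ℝ} (h : shiftC u v a k l ≠ 0) :
    u ≤ k ∧ v ≤ l ∧ a (k - u) (l - v) ≠ 0 := by
  unfold shiftC at h
  split_ifs at h with huv
  · exact ⟨huv.1, huv.2, h⟩
  · exact absurd rfl h

lemma DegLE.add_le {a : ℕ → ℕ → ℝ} {D k l : ℕ} (ha : DegLE a D) (h : a k l ≠ 0) :
    k + l ≤ D :=
  not_lt.1 fun hlt => h (ha k l hlt)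

section Columns

variable {d : ℕ} {β : ℕ → ℕ → ℝ}

lemma polyCol_eq_sum (a : ℕ → ℕ → ℝ) :
    polyCol d β a = ∑ c : Idx d, a c.1.1 c.1.2 • (momentMatrix d β).col c := by
  funext r
  simp only [polyCol, Matrix.mulVec, dotProduct, coeffVec, Finset.sum_apply, Pi.smul_apply,
    smul_eq_mul, Matrix.col_apply, mul_comm]

lemma polyCol_sub (a b : ℕ → ℕ → ℝ) :
    polyCol d β (a - b) = polyCol d β a - polyCol d β b :=
  Matrix.mulVec_sub _ _ _

lemma polyCol_monoC (c : Idx d) :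
    polyCol d β (monoC c.1.1 c.1.2) = (momentMatrix d β).col c := by
  rw [polyCol_eq_sum, Finset.sum_eq_single c]
  · simp [monoC]
  · intro c' _ hne
    have : ¬(c'.1.1 = c.1.1 ∧ c'.1.2 = c.1.2) := fun h => hne (Subtype.ext (Prod.ext h.1 h.2))
    simp [monoC, this]
  · simp

lemma polyCol_mem {S : Submodule ℝ (Idx d → ℝ)} {a : ℕ → ℕ → ℝ}
    (h : ∀ c : Idx d, a c.1.1 c.1.2 ≠ 0 → (momentMatrix d β).col c ∈ S) :
    polyCol d β a ∈ S := by
  rw [polyCol_eq_sum]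
  refine Submodule.sum_mem _ fun c _ => ?_
  by_cases hc : a c.1.1 c.1.2 = 0
  · simp [hc]
  · exact Submodule.smul_mem _ _ (h c hc)

lemma col_eq_polyCol_shiftC (c : Idx d) {u v : ℕ} (hu : u ≤ c.1.1) (hv : v ≤ c.1.2)
    {a : ℕ → ℕ → ℝ}
    (h : polyCol d β (shiftC (c.1.1 - u) (c.1.2 - v) (monoC u v - a)) = 0) :
    (momentMatrix d β).col c = polyCol d β (shiftC (c.1.1 - u) (c.1.2 - v) a) := by
  rwa [shiftC_sub, polyCol_sub, sub_eq_zero, shiftC_monoC, Nat.add_sub_cancel' hu,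
    Nat.add_sub_cancel' hv, polyCol_monoC] at h

end Columns

section Flat

variable {d n m : ℕ} {β p q : ℕ → ℕ → ℝ} {S : Submodule ℝ (Idx d → ℝ)}

lemma momentMatrix_col_mem_of_le_fst (hn1 : 1 ≤ n) (hp : DegLE p (n - 1))
    (hX : ∀ i j : ℕ, n + i + j ≤ d → polyCol d β (shiftC i j (monoC n 0 - p)) = 0)
    (hlow : ∀ c : Idx d, c.1.1 + c.1.2 < d → (momentMatrix d β).col c ∈ S)
    (c : Idx d) (hc : n ≤ c.1.1) : (momentMatrix d β).col c ∈ S := by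
  have hcd := c.2
  rw [col_eq_polyCol_shiftC c hc (Nat.zero_le _) (hX _ _ (by omega))]
  refine polyCol_mem fun c' hc' => hlow c' ?_
  obtain ⟨h1, h2, hne⟩ := shiftC_ne_zero hc'
  have := hp.add_le hne
  omega

theorem momentMatrix_col_mem_of_relations (hn1 : 1 ≤ n) (hp : DegLE p (n - 1)) (hq : DegLE q m)
    (hqm : q 0 m = 0)
    (hX : ∀ i j : ℕ, n + i + j ≤ d → polyCol d β (shiftC i j (monoC n 0 - p)) = 0)
    (hY : ∀ k l : ℕ, m + k + l ≤ d → polyCol d β (shiftC k l (monoC 0 m - q)) = 0)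
    (hnm : n + m ≤ d + 1)
    (hlow : ∀ c : Idx d, c.1.1 + c.1.2 < d → (momentMatrix d β).col c ∈ S)
    (c : Idx d) : (momentMatrix d β).col c ∈ S := by
  by_cases hnc : n ≤ c.1.1
  · exact momentMatrix_col_mem_of_le_fst hn1 hp hX hlow c hnc
  by_cases hcd : c.1.1 + c.1.2 < d
  · exact hlow c hcd
  have hc := c.2
  rw [col_eq_polyCol_shiftC c (Nat.zero_le _) (by omega : m ≤ c.1.2) (hY _ _ (by omega))]
  refine polyCol_mem fun c' hc' => ?_
  obtain ⟨h1, h2, hne⟩ := shiftC_ne_zero hc'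
  have hdeg := hq.add_le hne
  by_cases hc'd : c'.1.1 + c'.1.2 < d
  · exact hlow c' hc'd
  have hlt : c.1.1 < c'.1.1 := by
    by_contra hle
    have hc'2 : c'.1.2 - (c.1.2 - m) = m := by have := c'.2; omega
    rw [show c'.1.1 - (c.1.1 - 0) = 0 by omega, hc'2] at hne
    exact hne hqm
  exact momentMatrix_col_mem_of_relations hn1 hp hq hqm hX hY hnm hlow c'
termination_by n - c.1.1

end Flat

theorem statement19_general (d n m : ℕ)
    (hn1 : 1 ≤ n)
    (β p q : ℕ → ℕ → ℝ)
    (hp : DegLE p (n - 1)) (hq : DegLE q m) (hqm : q 0 m = 0)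
    (hX : ∀ i j : ℕ, n + i + j ≤ d → polyCol d β (shiftC i j (monoC n 0 - p)) = 0)
    (hY : ∀ k l : ℕ, m + k + l ≤ d → polyCol d β (shiftC k l (monoC 0 m - q)) = 0)
    (hnm : n + m ≤ d + 1) :
    (momentMatrix d β).rank = (momentMatrix (d - 1) β).rank ∧
    ∀ c : Idx d, c.1.1 + c.1.2 = d →
      (fun r : Idx d => momentMatrix d β r c) ∈
        Submodule.span ℝ
          {w : Idx d → ℝ | ∃ c' : Idx d, c'.1.1 + c'.1.2 ≤ d - 1 ∧
            w = fun r : Idx d => momentMatrix d β r c'} := by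
  have hcol := fun S => momentMatrix_col_mem_of_relations (S := S) hn1 hp hq hqm hX hY hnm
  constructor
  · rw [momentMatrix_eq_submatrix (Nat.sub_le d 1) β]
    refine ((momentMatrix_isSymm d β).rank_submatrix_eq_of_col_mem_span _ ?_).symm
    exact hcol _ fun c hc => Submodule.subset_span (Set.mem_range.2 ⟨⟨c.1, by omega⟩, rfl⟩)
  · intro c _
    refine hcol _ (fun c' hc' => ?_) c
    exact Submodule.subset_span ⟨c', by omega, rfl⟩

/-- If `M_d(β)` is positive semidefinite and recursively generated,
the recursive column relations coming from `X^n = p(X,Y)` and `Y^m = q(X,Y)` hold, and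
`n + m ≤ d + 1`, then `M_d(β)` is flat: `rank M_d = rank M_{d-1}`, i.e. every column of
degree `d` lies in the span of the columns of degree ≤ d-1. -/
theorem statement19 (d n m : ℕ) (hd : 1 ≤ d)
    (hn1 : 1 ≤ n) (hnd : n ≤ d) (hm1 : 1 ≤ m) (hmd : m ≤ d)
    (β p q : ℕ → ℕ → ℝ)
    (hpsd : (momentMatrix d β).PosSemidef)
    (hrg : RecursivelyGenerated d β)
    (hp : DegLE p (n - 1)) (hq : DegLE q m) (hqm : q 0 m = 0)
    (hX : ∀ i j : ℕ, n + i + j ≤ d → polyCol d β (shiftC i j (monoC n 0 - p)) = 0)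
    (hY : ∀ k l : ℕ, m + k + l ≤ d → polyCol d β (shiftC k l (monoC 0 m - q)) = 0)
    (hnm : n + m ≤ d + 1) :
    (momentMatrix d β).rank = (momentMatrix (d - 1) β).rank ∧
    ∀ c : Idx d, c.1.1 + c.1.2 = d →
      (fun r : Idx d => momentMatrix d β r c) ∈
        Submodule.span ℝ
          {w : Idx d → ℝ | ∃ c' : Idx d, c'.1.1 + c'.1.2 ≤ d - 1 ∧
            w = fun r : Idx d => momentMatrix d β r c'} :=
  statement19_general d n m hn1 β p q hp hq hqm hX hY hnm
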